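/- (Proposition 1, exact integral form.) Let m_AS, m_SA be positive integers, β_AS, β_SA > 0, and let h_AS and h_SA be independent random variables that are Gamma(m_AS, β_AS)- and Gamma(m_SA, β_SA)-distributed, respectively. Let μ1 > 0, let R > 0, and set υ1 = 2^R − 1. Then the outage probability of the harvest-then-transmit protocol satisfies P( log₂(1 + μ1 · h_AS · h_SA) < R ) = 1 − Σ_{i=0}^{m_AS−1} ((β_AS υ1/μ1)^i / i!) · (β_SA^{m_SA} / Γ(m_SA)) · ∫_0^∞ y^{m_SA−i−1} · exp(−β_AS υ1 / (μ1 y) − β_SA y) dy. -/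

import Mathlib

open MeasureTheory ProbabilityTheory Real
open Set Filter Topology Finset
open scoped Nat

/-!
Since both gains are a.s. positive, the outage event is `h_AS · h_SA < c` with `c = υ1 / μ1`.
By independence its probability is `∫ P(h_AS < c / y) dΓ(m_SA, β_SA)(y)`. For an integer shape
`m` the Gamma tail is a Poisson sum, `P(X ≥ t) = ∑_{i<m} e^{-βt} (βt)^i / i!`:
differentiating, the sum telescopes to minus the density. Integrating each Poisson term against the
Gamma(m_SA, β_SA) density produces the integrals of the statement.
-/

noncomputable def erlangSurvival (m : ℕ) (β t : ℝ) : ℝ :=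
  ∑ i ∈ range m, exp (-(β * t)) * (β * t) ^ i / i !

theorem hasDerivAt_erlangSurvival (k : ℕ) (β x : ℝ) :
    HasDerivAt (erlangSurvival (k + 1) β) (-(β * (β * x) ^ k / k ! * exp (-(β * x)))) x := by
  have hexp : HasDerivAt (fun x => exp (-(β * x))) (exp (-(β * x)) * -β) x := by
    simpa using ((hasDerivAt_id x).const_mul β).neg.exp
  induction k with
  | zero =>
    have hfun : erlangSurvival 1 β = fun y => exp (-(β * y)) := by
      funext y; simp [erlangSurvival]
    rw [hfun]
    exact hexp.congr_deriv (by simp; ring)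
  | succ k ih =>
    have hpow : HasDerivAt (fun x => (β * x) ^ (k + 1)) ((k + 1 : ℕ) * (β * x) ^ k * β) x := by
      simpa using ((hasDerivAt_id x).const_mul β).fun_pow (k + 1)
    have hfun : erlangSurvival (k + 2) β =
        fun y => erlangSurvival (k + 1) β y + exp (-(β * y)) * (β * y) ^ (k + 1) / (k + 1)! :=
      funext fun y => sum_range_succ _ _
    rw [hfun]
    refine (ih.add ((hexp.mul hpow).div_const _)).congr_deriv ?_
    rw [Nat.factorial_succ]
    push_cast
    field_simp
    ring

theorem tendsto_erlangSurvival_atTop (m : ℕ) {β : ℝ} (hβ : 0 < β) :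
    Tendsto (erlangSurvival m β) atTop (𝓝 0) := by
  have hβt : Tendsto (fun t => β * t) atTop atTop := tendsto_id.const_mul_atTop hβ
  have hsum := tendsto_finsetSum (range m) fun i _ =>
    ((tendsto_pow_mul_exp_neg_atTop_nhds_zero i).comp hβt).div_const (i ! : ℝ)
  rw [sum_eq_zero fun i _ => zero_div _] at hsum
  refine hsum.congr fun t => ?_
  simp only [erlangSurvival, Function.comp_apply, mul_comm]

theorem exp_neg_mul_pow_div_factorial_le_one {s : ℝ} (hs : 0 ≤ s) (i : ℕ) :
    exp (-s) * s ^ i / i ! ≤ 1 := by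
  rw [mul_div_assoc, exp_neg, inv_mul_le_one₀ (exp_pos s)]
  exact pow_div_factorial_le_exp s hs i

theorem integrable_exp_neg_mul_pow_div_factorial {α : Type*} [MeasurableSpace α] {μ : Measure α}
    [IsFiniteMeasure μ] {s : α → ℝ} (hs : Measurable s) (h0 : 0 ≤ᵐ[μ] s) (i : ℕ) :
    Integrable (fun x => exp (-s x) * s x ^ i / i !) μ := by
  refine (integrable_const (1 : ℝ)).mono' (by fun_prop) ?_
  filter_upwards [h0] with x hx
  rw [norm_of_nonneg (div_nonneg (mul_nonneg (exp_pos _).le (pow_nonneg hx i)) (Nat.cast_nonneg _))]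
  exact exp_neg_mul_pow_div_factorial_le_one hx i

theorem gammaPDFReal_natCast_succ (k : ℕ) (β : ℝ) {x : ℝ} (hx : 0 ≤ x) :
    gammaPDFReal (k + 1 : ℕ) β x = β * (β * x) ^ k / k ! * exp (-(β * x)) := by
  rw [gammaPDFReal, if_pos hx, Nat.cast_add_one, add_sub_cancel_right, Gamma_nat_eq_factorial,
    ← Nat.cast_add_one, rpow_natCast, rpow_natCast, pow_succ, mul_pow]
  ring

theorem ae_pos_gammaMeasure (a r : ℝ) : ∀ᵐ x ∂gammaMeasure a r, 0 < x := by
  simp only [ae_iff, not_lt]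
  change gammaMeasure a r (Iic 0) = 0
  rw [gammaMeasure, withDensity_apply _ measurableSet_Iic, ← setLIntegral_congr Iio_ae_eq_Iic]
  exact lintegral_gammaPDF_of_nonpos le_rfl

theorem gammaMeasure_Ici_natCast {m : ℕ} (hm : 0 < m) {β t : ℝ} (hβ : 0 < β) (ht : 0 ≤ t) :
    gammaMeasure m β (Ici t) = ENNReal.ofReal (erlangSurvival m β t) := by
  obtain ⟨k, rfl⟩ := Nat.exists_eq_add_one_of_ne_zero hm.ne'
  set g : ℝ → ℝ := fun x => β * (β * x) ^ k / k ! * exp (-(β * x))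
  have hderiv : ∀ x ∈ Ioi t, HasDerivAt (-erlangSurvival (k + 1) β) (g x) x :=
    fun x _ => (hasDerivAt_erlangSurvival k β x).neg.congr_deriv (neg_neg _)
  have hcont : ContinuousWithinAt (-erlangSurvival (k + 1) β) (Ici t) t :=
    (hasDerivAt_erlangSurvival k β t).continuousAt.neg.continuousWithinAt
  have hg : ∀ x ∈ Ioi t, 0 ≤ g x := fun x hx => by
    have : 0 ≤ x := ht.trans (le_of_lt hx)
    positivity
  have hlim := (tendsto_erlangSurvival_atTop (k + 1) hβ).neg
  rw [neg_zero] at hlim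
  have hpdf : ∀ x ∈ Ioi t, gammaPDF (k + 1 : ℕ) β x = ENNReal.ofReal (g x) := fun x hx =>
    congrArg ENNReal.ofReal (gammaPDFReal_natCast_succ k β (ht.trans (le_of_lt hx)))
  rw [gammaMeasure, withDensity_apply _ measurableSet_Ici, setLIntegral_congr Ioi_ae_eq_Ici.symm,
    setLIntegral_congr_fun measurableSet_Ioi hpdf,
    ← ofReal_integral_eq_lintegral_ofReal (integrableOn_Ioi_deriv_of_nonneg hcont hderiv hg hlim)
      ((ae_restrict_iff' measurableSet_Ioi).2 (ae_of_all _ hg)),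
    integral_Ioi_of_hasDerivAt_of_nonneg hcont hderiv hg hlim, zero_sub, Pi.neg_apply, neg_neg]

theorem erlangSurvival_nonneg (m : ℕ) {β t : ℝ} (hβ : 0 ≤ β) (ht : 0 ≤ t) :
    0 ≤ erlangSurvival m β t :=
  sum_nonneg fun i _ => by positivity

theorem measureReal_gammaMeasure_Iio_natCast {m : ℕ} (hm : 0 < m) {β t : ℝ} (hβ : 0 < β)
    (ht : 0 ≤ t) : (gammaMeasure m β).real (Iio t) = 1 - erlangSurvival m β t := by
  have := isProbabilityMeasure_gammaMeasure (Nat.cast_pos.2 hm) hβ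
  rw [← compl_Ici, measureReal_compl measurableSet_Ici, probReal_univ, measureReal_def,
    gammaMeasure_Ici_natCast hm hβ ht, ENNReal.toReal_ofReal (erlangSurvival_nonneg m hβ.le ht)]

theorem integral_gammaMeasure {a r : ℝ} (ha : 0 < a) (hr : 0 < r) (f : ℝ → ℝ) :
    ∫ x, f x ∂gammaMeasure a r =
      ∫ x in Ioi 0, r ^ a / Gamma a * x ^ (a - 1) * exp (-(r * x)) * f x := by
  rw [gammaMeasure, integral_withDensity_eq_integral_toReal_smul (f := gammaPDF a r)
    (measurable_gammaPDFReal a r).ennreal_ofReal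
    (ae_of_all _ fun _ => ENNReal.ofReal_lt_top), ← integral_Ici_eq_integral_Ioi,
    ← setIntegral_eq_integral_of_forall_compl_eq_zero]
  · refine setIntegral_congr_fun measurableSet_Ici fun x (hx : 0 ≤ x) => ?_
    rw [gammaPDF, ENNReal.toReal_ofReal (gammaPDFReal_nonneg ha hr x), gammaPDFReal, if_pos hx,
      smul_eq_mul]
  · intro x (hx : ¬ 0 ≤ x)
    simp [gammaPDF, gammaPDFReal, hx]

theorem gammaDensity_mul_poissonTerm (n i : ℕ) (r β c : ℝ) {y : ℝ} (hy : 0 < y) :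
    r ^ (n : ℝ) / Gamma n * y ^ ((n : ℝ) - 1) * exp (-(r * y)) *
        (exp (-(β * (c / y))) * (β * (c / y)) ^ i / i !)
      = (β * c) ^ i / i ! * (r ^ n / Gamma n) *
        (y ^ ((n : ℝ) - i - 1) * exp (-(β * c) / y - r * y)) := by
  have hpow : y ^ ((n : ℝ) - i - 1) = y ^ ((n : ℝ) - 1) / y ^ i := by
    rw [sub_right_comm, rpow_sub hy, rpow_natCast]
  have hexp : exp (-(β * c) / y - r * y) = exp (-(β * (c / y))) * exp (-(r * y)) := by
    rw [← exp_add]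
    ring_nf
  rw [hpow, hexp, rpow_natCast, ← mul_div_assoc β c y, div_pow]
  ring

section GammaMixture

variable {β c r : ℝ} {n : ℕ}

theorem integrable_poissonTerm_div_gammaMeasure (hβ : 0 ≤ β) (hc : 0 ≤ c) (hn : 0 < n)
    (hr : 0 < r) (i : ℕ) :
    Integrable (fun y => exp (-(β * (c / y))) * (β * (c / y)) ^ i / i !) (gammaMeasure n r) := by
  have := isProbabilityMeasure_gammaMeasure (Nat.cast_pos.2 hn) hr
  refine integrable_exp_neg_mul_pow_div_factorial (by fun_prop) ?_ i
  filter_upwards [ae_pos_gammaMeasure n r] with y hy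
  positivity

theorem integrable_erlangSurvival_div_gammaMeasure (hβ : 0 ≤ β) (hc : 0 ≤ c) (hn : 0 < n)
    (hr : 0 < r) (m : ℕ) :
    Integrable (fun y => erlangSurvival m β (c / y)) (gammaMeasure n r) :=
  integrable_finsetSum _ fun i _ => integrable_poissonTerm_div_gammaMeasure hβ hc hn hr i

theorem integral_erlangSurvival_div_gammaMeasure (hβ : 0 ≤ β) (hc : 0 ≤ c) (hn : 0 < n)
    (hr : 0 < r) (m : ℕ) :
    ∫ y, erlangSurvival m β (c / y) ∂gammaMeasure n r =
      ∑ i ∈ range m, (β * c) ^ i / i ! * (r ^ n / Gamma n) *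
        ∫ y in Ioi 0, y ^ ((n : ℝ) - i - 1) * exp (-(β * c) / y - r * y) := by
  simp only [erlangSurvival]
  rw [integral_finsetSum _ fun i _ =>
    integrable_poissonTerm_div_gammaMeasure hβ hc hn hr i]
  refine sum_congr rfl fun i _ => ?_
  rw [integral_gammaMeasure (Nat.cast_pos.2 hn) hr, ← integral_const_mul]
  refine setIntegral_congr_fun measurableSet_Ioi fun y (hy : 0 < y) => ?_
  exact gammaDensity_mul_poissonTerm n i r β c hy

end GammaMixture

theorem measureReal_prod_apply_symm {α γ : Type*} [MeasurableSpace α] [MeasurableSpace γ]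
    {μ : Measure α} {ν : Measure γ} [IsFiniteMeasure μ] [SFinite ν] {s : Set (α × γ)}
    (hs : MeasurableSet s) :
    (μ.prod ν).real s = ∫ y, μ.real ((fun x => (x, y)) ⁻¹' s) ∂ν := by
  rw [measureReal_def, Measure.prod_apply_symm hs, ← integral_toReal
    (measurable_measure_prodMk_right hs).aemeasurable (ae_of_all _ fun _ => measure_lt_top _ _)]
  rfl

theorem logb_one_add_mul_lt_iff {μ R q : ℝ} (hμ : 0 < μ) (hq : 0 ≤ q) :
    logb 2 (1 + μ * q) < R ↔ q < (2 ^ R - 1) / μ := by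
  rw [logb_lt_iff_lt_rpow one_lt_two (by positivity), lt_div_iff₀ hμ]
  constructor <;> intro h <;> linarith

theorem ProbabilityTheory.IndepFun.measureReal_preimage_prodMk {Ω α γ : Type*}
    [MeasurableSpace Ω] [MeasurableSpace α] [MeasurableSpace γ] {P : Measure Ω}
    [IsFiniteMeasure P] {X : Ω → α} {Y : Ω → γ} (hX : Measurable X) (hY : Measurable Y)
    (hXY : IndepFun X Y P)
    {s : Set (α × γ)} (hs : MeasurableSet s) :
    P.real ((fun ω => (X ω, Y ω)) ⁻¹' s) =
      ∫ y, (P.map X).real ((fun x => (x, y)) ⁻¹' s) ∂P.map Y := by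
  rw [← map_measureReal_apply (hX.prodMk hY) hs,
    (indepFun_iff_map_prod_eq_prod_map_map hX.aemeasurable hY.aemeasurable).1 hXY,
    measureReal_prod_apply_symm hs]

theorem ae_pos_of_map_eq_gammaMeasure {Ω : Type*} [MeasurableSpace Ω] {P : Measure Ω}
    {X : Ω → ℝ} (hX : Measurable X) {a r : ℝ} (hd : P.map X = gammaMeasure a r) :
    ∀ᵐ ω ∂P, 0 < X ω :=
  ae_of_ae_map hX.aemeasurable (hd ▸ ae_pos_gammaMeasure a r)

/-- Proposition 1 (exact integral form): outage probability of the HTT protocol.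
If `h_AS ~ Gamma(m_AS, β_AS)` and `h_SA ~ Gamma(m_SA, β_SA)` are independent, `μ1 > 0`,
`R > 0` and `υ1 = 2^R − 1`, then
`P(log₂(1 + μ1 h_AS h_SA) < R) = 1 − Σ_{i=0}^{m_AS−1} ((β_AS υ1/μ1)^i / i!) ·
  (β_SA^{m_SA}/Γ(m_SA)) ∫_0^∞ y^{m_SA−i−1} exp(−β_AS υ1/(μ1 y) − β_SA y) dy`. -/
theorem htt_outage_probability
    {Ω : Type*} [MeasurableSpace Ω] (P : Measure Ω) [IsProbabilityMeasure P]
    (mAS mSA : ℕ) (hmAS : 0 < mAS) (hmSA : 0 < mSA)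
    (βAS βSA : ℝ) (hβAS : 0 < βAS) (hβSA : 0 < βSA)
    (hAS hSA : Ω → ℝ) (hmeasAS : Measurable hAS) (hmeasSA : Measurable hSA)
    (hdAS : Measure.map hAS P = gammaMeasure mAS βAS)
    (hdSA : Measure.map hSA P = gammaMeasure mSA βSA)
    (hInd : IndepFun hAS hSA P)
    (μ1 R υ1 : ℝ) (hμ1 : 0 < μ1) (hR : 0 < R) (hυ1 : υ1 = 2 ^ R - 1) :
    (P {ω | Real.logb 2 (1 + μ1 * (hAS ω * hSA ω)) < R}).toReal =
      1 - ∑ i ∈ Finset.range mAS,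
        ((βAS * υ1 / μ1) ^ i / (Nat.factorial i)) * (βSA ^ mSA / Real.Gamma mSA) *
          ∫ y in Set.Ioi (0 : ℝ),
            y ^ ((mSA : ℝ) - i - 1) *
              Real.exp (-(βAS * υ1) / (μ1 * y) - βSA * y)  := by
  have := isProbabilityMeasure_gammaMeasure (Nat.cast_pos.2 hmSA) hβSA
  set c := υ1 / μ1 with hc_def
  have hc : 0 < c := div_pos (by linarith [one_lt_rpow one_lt_two hR]) hμ1
  have hevent : {ω | logb 2 (1 + μ1 * (hAS ω * hSA ω)) < R}
      =ᵐ[P] (fun ω => (hAS ω, hSA ω)) ⁻¹' {p | p.1 * p.2 < c} := by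
    filter_upwards [ae_pos_of_map_eq_gammaMeasure hmeasAS hdAS,
      ae_pos_of_map_eq_gammaMeasure hmeasSA hdSA] with ω hx hy
    show _ = (hAS ω * hSA ω < c)
    rw [hc_def, hυ1]
    exact propext (logb_one_add_mul_lt_iff hμ1 (mul_pos hx hy).le)
  have hslice : ∀ᵐ y ∂gammaMeasure mSA βSA,
      (gammaMeasure mAS βAS).real ((fun x => (x, y)) ⁻¹' {p | p.1 * p.2 < c})
        = 1 - erlangSurvival mAS βAS (c / y) := by
    filter_upwards [ae_pos_gammaMeasure mSA βSA] with y hy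
    have : (fun x => (x, y)) ⁻¹' {p : ℝ × ℝ | p.1 * p.2 < c} = Iio (c / y) :=
      ext fun x => (lt_div_iff₀ hy).symm
    rw [this, measureReal_gammaMeasure_Iio_natCast hmAS hβAS (div_pos hc hy).le]
  have hexponent (y : ℝ) : -(βAS * υ1 / μ1) / y = -(βAS * υ1) / (μ1 * y) := by ring
  calc (P {ω | logb 2 (1 + μ1 * (hAS ω * hSA ω)) < R}).toReal
      = ∫ y, 1 - erlangSurvival mAS βAS (c / y) ∂gammaMeasure mSA βSA := by
        rw [← measureReal_def, measureReal_congr hevent, hInd.measureReal_preimage_prodMk hmeasAS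
          hmeasSA (measurableSet_lt (by fun_prop) (by fun_prop)), hdAS, hdSA]
        exact integral_congr_ae hslice
    _ = 1 - ∫ y, erlangSurvival mAS βAS (c / y) ∂gammaMeasure mSA βSA := by
        rw [integral_sub (integrable_const 1)
            (integrable_erlangSurvival_div_gammaMeasure hβAS.le hc.le hmSA hβSA mAS),
          integral_const, probReal_univ, one_smul]
    _ = _ := by
        rw [integral_erlangSurvival_div_gammaMeasure hβAS.le hc.le hmSA hβSA, ← mul_div_assoc]
        simp only [hexponent]
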